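/- arXiv:2209.01366 — 2 statements merged into one kernel-verified Lean document; each statement's English description precedes it below -/
import Mathlib

section
/- Let r ≥ 1. For every ε > 0 there exists p₀ such that for every prime p ≥ p₀ there exists n₀ such that for every integer n ≥ max(n₀, 2r+1), the class F_L(p,n) satisfies opt_std(F_L(p,n)) = n and opt_weak(CART_r(F_L(p,n))) ≥ (1−ε)·p^r·ln(p)·(opt_std(F_L(p,n)) − 2r). In particular, for all M > 2r and infinitely many k there is a class F of functions into a set Y of size k with opt_std(F) = M and opt_weak(CART_r(F)) ≥ (1−o(1))·(|Y|^r ln|Y|)·(opt_std(F) − 2r). -/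
/-!
Standard model: the class is an affine space of functions over `𝔽_p` of dimension `n`. A guess can
only be called wrong at a query that separates the version space, and revealing the value there
cuts its dimension by one, so at most `n` mistakes can be forced; querying the unit vectors and
always contradicting the learner forces `n`.

Weak model: two distinct linear functionals agree on exactly a `1/p` fraction of the inputs. A
second-moment count of collisions then shows that for every finite version space `W` some `r`-tuple
of queries splits `W` into fibres of size at most `|W|/p^r + √|W|`. Answering "no" to every guess
thus keeps a `1 - (1 + δ)/p^r` fraction of `W` as long as `|W| ≥ (p^r/δ)²`, and starting from
`|W| = p^n` this lasts about `p^r · ln (p^(n-2r))` rounds.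
-/

/-- `GuessForce ok V m` means: in the mistake-bound game with weak (yes/no) reinforcement
where queries have type `Q`, guesses have type `A`, and `ok q g f` says that guess `g` is a
correct answer to query `q` when the hidden target is `f`, an (adaptive) adversary whose
answers must stay consistent with some member of the current version space `V` can force
every deterministic learner to be answered "no" at least `m` times.
At each step the adversary chooses a query `q` and, depending on the learner's guess `g`,
either answers "no" (`c g = true`, one more mistake, continuing from the consistent
functions for which the guess is wrong) or answers "yes" (`c g = false`, continuing from the
consistent functions for which the guess is correct). -/
inductive GuessForce {α Q A : Type*} (ok : Q → A → α → Prop) : Set α → ℕ → Prop where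
  | zero (V : Set α) : V.Nonempty → GuessForce ok V 0
  | step (V : Set α) (m : ℕ) (q : Q) (c : A → Bool)
      (hne : ∀ g : A, (if c g then {f ∈ V | ¬ ok q g f} else {f ∈ V | ok q g f}).Nonempty)
      (h : ∀ g : A, GuessForce ok (if c g then {f ∈ V | ¬ ok q g f} else {f ∈ V | ok q g f})
        (if c g then m else m + 1)) :
      GuessForce ok V (m + 1)

/-- `opt_weak(CART_r(F))`: the optimal worst-case number of mistakes in the `r`-input weak
reinforcement model, where in each round the adversary presents `r` inputs simultaneously,
the learner guesses all `r` outputs, and is only told whether all `r` guesses are correct. -/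
noncomputable def optWeakCart {X Y : Type*} (r : ℕ) (F : Set (X → Y)) : ℕ :=
  sSup {m | GuessForce (fun (x : Fin r → X) (g : Fin r → Y) f => ∀ i, f (x i) = g i) F m}

/-- `StdForce V m`: in the standard model (the true value of the target at the queried input
is revealed after each guess), the adversary can force `m` mistakes against every learner,
staying consistent with the version space `V`. Here `yc g` is the value revealed when the
learner guesses `g` (a mistake iff `yc g ≠ g`, recorded by `c g`). -/
inductive StdForce {X Y : Type*} : Set (X → Y) → ℕ → Prop where
  | zero (V : Set (X → Y)) : V.Nonempty → StdForce V 0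
  | step (V : Set (X → Y)) (m : ℕ) (x : X) (yc : Y → Y) (c : Y → Bool)
      (hmistake : ∀ g : Y, c g = true → yc g ≠ g)
      (hcorrect : ∀ g : Y, c g = false → yc g = g)
      (hne : ∀ g : Y, {f ∈ V | f x = yc g}.Nonempty)
      (h : ∀ g : Y, StdForce {f ∈ V | f x = yc g} (if c g then m else m + 1)) :
      StdForce V (m + 1)

/-- `opt_std(F)`: the optimal worst-case number of mistakes in the standard model. -/
noncomputable def optStd {X Y : Type*} (F : Set (X → Y)) : ℕ :=
  sSup {m | StdForce F m}

/-- The class `F_L(p,n)` of linear functionals `x ↦ a·x mod p` on `{0,…,p−1}^n`. -/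
def FL (p n : ℕ) : Set ((Fin n → ZMod p) → ZMod p) :=
  Set.range (fun a : Fin n → ZMod p => fun x => ∑ j, a j * x j)

open Finset Module

namespace StdForce

variable {X Y : Type*}

theorem nonempty [Nonempty Y] {V : Set (X → Y)} {m : ℕ} (h : StdForce V m) : V.Nonempty := by
  cases h with
  | zero _ hV => exact hV
  | step _ _ x yc _ _ _ hne _ => exact (hne (Classical.arbitrary Y)).mono (Set.sep_subset _ _)

theorem of_forall_ne [Nonempty Y] {V : Set (X → Y)} {m : ℕ} (x : X) (yc : Y → Y)
    (hyc : ∀ g, yc g ≠ g) (h : ∀ g, StdForce {f ∈ V | f x = yc g} m) : StdForce V (m + 1) :=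
  .step V m x yc (fun _ => true) (fun g _ => hyc g) (fun _ h => nomatch h)
    (fun g => (h g).nonempty) h

theorem of_shatters [Nontrivial Y] [DecidableEq X] (s : Finset X) :
    ∀ F : Set (X → Y), (∀ y : X → Y, ∃ f ∈ F, ∀ x ∈ s, f x = y x) → StdForce F #s := by
  induction s using Finset.induction_on with
  | empty =>
    intro F hF
    obtain ⟨f, hf, -⟩ := hF fun _ => Classical.arbitrary Y
    exact .zero F ⟨f, hf⟩
  | insert x s hx ih =>
    intro F hF
    rw [card_insert_of_notMem hx]
    choose yc hyc using fun g : Y => exists_ne g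
    refine of_forall_ne x yc hyc fun g => ih _ fun y => ?_
    obtain ⟨f, hf, hfy⟩ := hF (Function.update y x (yc g))
    refine ⟨f, ⟨hf, by simpa using hfy x (mem_insert_self x s)⟩, fun z hz => ?_⟩
    rw [hfy z (mem_insert_of_mem hz), Function.update_of_ne (ne_of_mem_of_not_mem hz hx)]

theorem le_finrank {K : Type*} [Field K] {V : Set (X → K)} {m : ℕ} (h : StdForce V m) :
    ∀ (U : Submodule K (X → K)) [FiniteDimensional K U] (f₀ : X → K),
      V = {f | f - f₀ ∈ U} → m ≤ finrank K U := by
  induction h with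
  | zero => intros; exact Nat.zero_le _
  | step V m x yc c hmistake _ hne _ ih =>
    rintro U _ f₀ rfl
    by_cases hU : U ≤ LinearMap.ker (LinearMap.proj x)
    · -- every member of `V` takes the value `f₀ x` at `x`, so that guess cannot be called wrong
      have hconst : ∀ f ∈ {f | f - f₀ ∈ U}, f x = f₀ x := fun f hf => by
        simpa [sub_eq_zero] using hU hf
      obtain ⟨f₁, hf₁, hf₁x⟩ := hne (f₀ x)
      have hyc : yc (f₀ x) = f₀ x := hf₁x.symm.trans (hconst f₁ hf₁)
      have hc : c (f₀ x) = false := by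
        cases hcg : c (f₀ x)
        · rfl
        · exact absurd hyc (hmistake _ hcg)
      have hV : {f ∈ {f | f - f₀ ∈ U} | f x = yc (f₀ x)} = {f | f - f₀ ∈ U} := by
        ext f
        simp only [Set.mem_ofPred_eq, and_iff_left_iff_imp, hyc]
        exact hconst f
      simpa [hc] using ih (f₀ x) U f₀ hV
    · -- any revealed value cuts the direction `U` down to a proper subspace
      obtain ⟨f₁, hf₁, hf₁x⟩ := hne 0
      set U' := U ⊓ LinearMap.ker (LinearMap.proj x)
      have hlt : U' < U := inf_le_left.lt_of_ne fun h => hU (h ▸ inf_le_right)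
      have hV : {f ∈ {f | f - f₀ ∈ U} | f x = yc 0} = {f | f - f₁ ∈ U'} := by
        ext f
        simp only [Set.mem_ofPred_eq, U', Submodule.mem_inf, LinearMap.mem_ker,
          LinearMap.proj_apply, Pi.sub_apply, sub_eq_zero, hf₁x]
        rw [← sub_sub_sub_cancel_right f f₁ f₀, U.sub_mem_iff_left hf₁]
      have := ih 0 U' f₁ hV
      have := Submodule.finrank_lt_finrank_of_lt hlt
      split_ifs at * <;> omega

end StdForce

namespace GuessForce

variable {α Q A : Type*} {ok : Q → A → α → Prop}

theorem nonempty [Nonempty A] {V : Set α} {m : ℕ} (h : GuessForce ok V m) : V.Nonempty := by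
  cases h with
  | zero _ hV => exact hV
  | step _ _ q c hne _ =>
    obtain ⟨f, hf⟩ := hne (Classical.arbitrary A)
    split_ifs at hf <;> exact ⟨f, hf.1⟩

theorem of_forall_not [Nonempty A] {V : Set α} {m : ℕ} (q : Q)
    (h : ∀ g, GuessForce ok {f ∈ V | ¬ ok q g f} m) : GuessForce ok V (m + 1) :=
  .step V m q (fun _ => true) (fun g => (h g).nonempty) h

theorem lt_ncard [Nonempty A] (hok : ∀ q f, ∃ g, ok q g f) {V : Set α} {m : ℕ}
    (h : GuessForce ok V m) (hV : V.Finite) : m < V.ncard := by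
  induction h with
  | zero V hne => exact (Set.ncard_pos hV).mpr hne
  | step V m q c hne h ih =>
    obtain ⟨f₀, hf₀⟩ := (GuessForce.step V m q c hne h).nonempty
    obtain ⟨g, hg⟩ := hok q f₀
    specialize ih g (hV.subset (by split_ifs <;> exact Set.sep_subset _ _))
    cases hc : c g <;> simp only [hc, Bool.false_eq_true, if_true, if_false] at ih
    · exact ih.trans_le (Set.ncard_le_ncard (Set.sep_subset _ _) hV)
    · have hlt : {f ∈ V | ¬ ok q g f} ⊂ V :=
        (Set.ssubset_iff_of_subset (Set.sep_subset _ _)).2 ⟨f₀, hf₀, fun h => h.2 hg⟩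
      exact Nat.lt_of_lt_of_le (Nat.succ_lt_succ ih) (Set.ncard_lt_ncard hlt hV)

end GuessForce

theorem le_optWeakCart {X Y : Type*} [Nonempty Y] {F : Set (X → Y)} (hF : F.Finite) {r m : ℕ}
    (h : GuessForce (fun (x : Fin r → X) (g : Fin r → Y) f => ∀ i, f (x i) = g i) F m) :
    m ≤ optWeakCart r F :=
  le_csSup ⟨F.ncard, fun _ hk =>
    (hk.lt_ncard (fun x f => ⟨fun i => f (x i), fun _ => rfl⟩) hF).le⟩ h

section SecondMoment

variable {α Z : Type*} [Fintype Z] [DecidableEq Z]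

theorem sum_card_fiber_sq (s : Finset α) (φ : α → Z) :
    ∑ z, #{a ∈ s | φ a = z} ^ 2 = #{q ∈ s ×ˢ s | φ q.1 = φ q.2} := by
  rw [card_eq_sum_card_fiberwise (f := fun q => φ q.1) (t := univ) fun _ _ => mem_univ _]
  refine sum_congr rfl fun z _ => ?_
  rw [sq, ← card_product, filter_filter, ← filter_product]
  congr 1
  refine filter_congr fun q _ => ?_
  exact ⟨fun ⟨h1, h2⟩ => ⟨h1.trans h2.symm, h1⟩, fun ⟨h12, h1⟩ => ⟨h1, h12.symm.trans h1⟩⟩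

theorem card_fiber_le_of_card_collisions_le {s : Finset α} {φ : α → Z}
    (h : #{q ∈ s ×ˢ s | φ q.1 = φ q.2} * Fintype.card Z ≤ #s * Fintype.card Z + #s ^ 2)
    (z : Z) : (#{a ∈ s | φ a = z} : ℝ) ≤ #s / Fintype.card Z + √(#s : ℝ) := by
  set N : Z → ℝ := fun w => #{a ∈ s | φ a = w}
  set μ : ℝ := #s / Fintype.card Z
  have hZ : (0 : ℝ) < Fintype.card Z := by exact_mod_cast Fintype.card_pos_iff.2 ⟨z⟩
  have hsum : ∑ w, N w = #s := by
    simp only [N]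
    exact_mod_cast (card_eq_sum_card_fiberwise fun a _ => mem_univ (φ a)).symm
  have hsq : (∑ w, N w ^ 2) * Fintype.card Z ≤ #s * Fintype.card Z + #s ^ 2 := by
    simp only [N]
    exact_mod_cast sum_card_fiber_sq s φ ▸ h
  have hvar : (N z - μ) ^ 2 ≤ #s := by
    calc (N z - μ) ^ 2
        ≤ ∑ w, (N w - μ) ^ 2 :=
          single_le_sum (f := fun w => (N w - μ) ^ 2) (fun _ _ => sq_nonneg _) (mem_univ z)
      _ = ∑ w, N w ^ 2 - #s ^ 2 / Fintype.card Z := by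
          simp only [sub_sq, sum_add_distrib, sum_sub_distrib, ← sum_mul, ← mul_sum, hsum,
            sum_const, card_univ, nsmul_eq_mul, μ]
          field_simp
          ring
      _ ≤ #s := by
          have := (le_div_iff₀ hZ).2 hsq
          rw [add_div, mul_div_cancel_right₀ _ hZ.ne'] at this
          linarith
  linarith [Real.abs_le_sqrt hvar, le_abs_self (N z - μ)]

end SecondMoment

def HasSmallAgreement {X Y : Type*} [Fintype X] [Fintype Y] [DecidableEq Y]
    (F : Set (X → Y)) : Prop :=
  ∀ f ∈ F, ∀ g ∈ F, f ≠ g → #{x | f x = g x} * Fintype.card Y ≤ Fintype.card X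

section SmallAgreement

variable {X Y : Type*} [Fintype X] [DecidableEq Y]

theorem card_agree_pi (f g : X → Y) (r : ℕ) :
    #{x : Fin r → X | ∀ i, f (x i) = g (x i)} = #{x | f x = g x} ^ r := by
  rw [← Fintype.card_piFinset_const]
  congr 1
  ext x
  simp [Fintype.mem_piFinset]

variable [Fintype Y] {F : Set (X → Y)}

theorem HasSmallAgreement.card_agree_pi_mul_le (hF : HasSmallAgreement F) {f g : X → Y}
    (hf : f ∈ F) (hg : g ∈ F) (r : ℕ) :
    #{x : Fin r → X | ∀ i, f (x i) = g (x i)} * Fintype.card Y ^ r ≤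
      Fintype.card X ^ r * ((if f = g then Fintype.card Y ^ r else 0) + 1) := by
  rw [card_agree_pi]
  split_ifs with hfg
  · simpa [hfg] using Nat.mul_le_mul_left _ (Nat.le_succ _)
  · rw [mul_add, mul_zero, zero_add, mul_one, ← mul_pow]
    exact Nat.pow_le_pow_left (hF f hf g hg hfg) r

variable [Nonempty X]

theorem HasSmallAgreement.exists_query_card_collisions_le (hF : HasSmallAgreement F)
    {W : Finset (X → Y)} (hW : ↑W ⊆ F) (r : ℕ) :
    ∃ x : Fin r → X, #{q ∈ W ×ˢ W | ∀ i, q.1 (x i) = q.2 (x i)} * Fintype.card Y ^ r ≤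
      #W * Fintype.card Y ^ r + #W ^ 2 := by
  classical
  suffices ∑ x : Fin r → X, #{q ∈ W ×ˢ W | ∀ i, q.1 (x i) = q.2 (x i)} * Fintype.card Y ^ r ≤
      ∑ _x : Fin r → X, (#W * Fintype.card Y ^ r + #W ^ 2) by
    obtain ⟨x, -, hx⟩ := exists_le_of_sum_le univ_nonempty this
    exact ⟨x, hx⟩
  calc ∑ x : Fin r → X, #{q ∈ W ×ˢ W | ∀ i, q.1 (x i) = q.2 (x i)} * Fintype.card Y ^ r
      = ∑ q ∈ W ×ˢ W, #{x : Fin r → X | ∀ i, q.1 (x i) = q.2 (x i)} * Fintype.card Y ^ r := by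
        rw [← sum_mul, ← sum_mul]
        congr 1
        exact sum_card_bipartiteAbove_eq_sum_card_bipartiteBelow _
    _ ≤ ∑ q ∈ W ×ˢ W, Fintype.card X ^ r * ((if q.1 = q.2 then Fintype.card Y ^ r else 0) + 1) :=
        sum_le_sum fun q hq => by
          rw [mem_product] at hq
          exact hF.card_agree_pi_mul_le (hW hq.1) (hW hq.2) r
    _ = ∑ _x : Fin r → X, (#W * Fintype.card Y ^ r + #W ^ 2) := by
        rw [← mul_sum, sum_add_distrib, ← sum_filter, sum_const, sum_const, ← diag_eq_filter,
          diag_card]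
        simp [sq]

theorem HasSmallAgreement.exists_query_card_fiber_le (hF : HasSmallAgreement F)
    {W : Finset (X → Y)} (hW : ↑W ⊆ F) (r : ℕ) :
    ∃ x : Fin r → X, ∀ g : Fin r → Y,
      (#{f ∈ W | ∀ i, f (x i) = g i} : ℝ) ≤ #W / (Fintype.card Y : ℝ) ^ r + √(#W : ℝ) := by
  obtain ⟨x, hx⟩ := hF.exists_query_card_collisions_le hW r
  refine ⟨x, fun g => ?_⟩
  simpa [funext_iff] using card_fiber_le_of_card_collisions_le (s := W)
    (φ := fun (f : X → Y) i => f (x i)) (by simpa [funext_iff] using hx) g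

theorem HasSmallAgreement.guessForce_of_le_card [Nonempty Y] (hF : HasSmallAgreement F)
    {r : ℕ} {δ : ℝ} (hδ : 0 < δ) (hq : 1 + δ ≤ (Fintype.card Y : ℝ) ^ r) :
    ∀ (m : ℕ) (W : Finset (X → Y)), ↑W ⊆ F →
      ((Fintype.card Y : ℝ) ^ r / δ) ^ 2 ≤ (1 - (1 + δ) / Fintype.card Y ^ r) ^ m * #W →
      GuessForce (fun (x : Fin r → X) (g : Fin r → Y) (f : X → Y) => ∀ i, f (x i) = g i) ↑W m := by
  set q : ℝ := (Fintype.card Y : ℝ) ^ r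
  set β : ℝ := (1 + δ) / q
  have hq0 : 0 < q := by linarith
  have hβ0 : 0 ≤ 1 - β := sub_nonneg.2 ((div_le_one hq0).2 hq)
  have hβ1 : 1 - β ≤ 1 := sub_le_self _ (by positivity)
  intro m
  induction m with
  | zero =>
    intro W _ hW
    rw [pow_zero, one_mul] at hW
    have : (0 : ℝ) < #W := (by positivity : (0 : ℝ) < (q / δ) ^ 2).trans_le hW
    exact .zero _ (coe_nonempty.2 (card_pos.1 (by exact_mod_cast this)))
  | succ m ih =>
    intro W hWF hW
    have hbig : (q / δ) ^ 2 ≤ #W :=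
      hW.trans (mul_le_of_le_one_left (by positivity) (pow_le_one₀ hβ0 hβ1))
    have hsqrt : √(#W : ℝ) ≤ δ * #W / q := by
      have h1 : q ≤ δ * √(#W : ℝ) := by
        rw [← div_le_iff₀' hδ]
        exact Real.le_sqrt_of_sq_le hbig
      rw [le_div_iff₀ hq0]
      nlinarith [Real.mul_self_sqrt (Nat.cast_nonneg (α := ℝ) #W), Real.sqrt_nonneg (#W : ℝ)]
    obtain ⟨x, hx⟩ := hF.exists_query_card_fiber_le hWF r
    refine GuessForce.of_forall_not x fun g => ?_
    have hno : (1 - β) * #W ≤ #{f ∈ W | ¬ ∀ i, f (x i) = g i} := by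
      have hsplit := card_filter_add_card_filter_not (s := W) (p := fun f => ∀ i, f (x i) = g i)
      have hyes : (#{f ∈ W | ∀ i, f (x i) = g i} : ℝ) ≤ β * #W := by
        calc _ ≤ #W / q + √(#W : ℝ) := hx g
          _ ≤ #W / q + δ * #W / q := by linarith
          _ = β * #W := by simp only [β]; ring
      have : (#{f ∈ W | ∀ i, f (x i) = g i} : ℝ) + #{f ∈ W | ¬ ∀ i, f (x i) = g i} = #W := by
        exact_mod_cast hsplit
      linarith
    have hW' : (q / δ) ^ 2 ≤ (1 - β) ^ m * #{f ∈ W | ¬ ∀ i, f (x i) = g i} :=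
      calc (q / δ) ^ 2 ≤ (1 - β) ^ (m + 1) * #W := hW
        _ = (1 - β) ^ m * ((1 - β) * #W) := by ring
        _ ≤ _ := mul_le_mul_of_nonneg_left hno (pow_nonneg hβ0 m)
    have := ih _ (subset_trans (coe_subset.2 (filter_subset _ W)) hWF) hW'
    rwa [coe_filter] at this

end SmallAgreement

theorem card_zeros_mul_card_of_surjective {G M : Type*} [AddGroup G] [Fintype G] [AddMonoid M]
    [Fintype M] [DecidableEq M] (φ : G →+ M) (hφ : Function.Surjective φ) :
    #{x | φ x = 0} * Fintype.card M = Fintype.card G := by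
  have := card_eq_sum_card_fiberwise (s := univ) (t := univ) (f := φ) fun _ _ => mem_univ _
  rw [sum_congr rfl fun y _ => AddMonoidHom.card_fiber_eq_of_mem_range φ (hφ y) (hφ 0),
    sum_const, card_univ, card_univ, smul_eq_mul] at this
  rw [this, mul_comm]

open Real in
theorem sq_div_le_one_sub_div_pow_mul {q δ N : ℝ} {m : ℕ} (hδ : 0 < δ) (hq : 1 + δ < q)
    (hN : 0 < N) (hm : m * (1 + δ) ≤ (q - 1 - δ) * (log N - 2 * log (q / δ))) :
    (q / δ) ^ 2 ≤ (1 - (1 + δ) / q) ^ m * N := by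
  have hq0 : 0 < q := by linarith
  have hd : 0 < q - 1 - δ := by linarith
  have hβ : 0 < 1 - (1 + δ) / q := sub_pos.2 ((div_lt_one hq0).2 hq)
  rw [← log_le_log_iff (by positivity) (by positivity), log_mul (by positivity) hN.ne', log_pow,
    log_pow]
  have hlog : -((1 + δ) / (q - 1 - δ)) ≤ log (1 - (1 + δ) / q) := by
    convert one_sub_inv_le_log_of_pos hβ using 1
    rw [one_sub_div hq0.ne', inv_div, one_sub_div (by linarith), sub_sub, ← neg_div]
    ring
  have hm' : m * ((1 + δ) / (q - 1 - δ)) ≤ log N - 2 * log (q / δ) := by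
    rw [← mul_div_assoc, div_le_iff₀ hd]
    linarith
  nlinarith [mul_le_mul_of_nonneg_left hlog (Nat.cast_nonneg (α := ℝ) m)]

section LinearFunctionals

variable {p n : ℕ} [Fact p.Prime]

theorem stdForce_FL : StdForce (FL p n) n := by
  classical
  let e := Pi.basisFun (ZMod p) (Fin n)
  have hcard : #(univ.image e) = n := by
    rw [card_image_of_injective _ e.injective, card_univ, Fintype.card_fin]
  suffices StdForce (FL p n) #(univ.image e) by rwa [hcard] at this
  refine StdForce.of_shatters _ _ fun y => ⟨fun x => ∑ j, y (e j) * x j, ⟨_, rfl⟩, ?_⟩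
  simp only [mem_image, mem_univ, true_and, forall_exists_index, forall_apply_eq_imp_iff]
  intro i
  change (fun j => y (e j)) ⬝ᵥ e i = y (e i)
  simp [e, dotProduct_single]

theorem optStd_FL : optStd (FL p n) = n := by
  let L := LinearMap.ltoFun (ZMod p) (Fin n → ZMod p) (ZMod p) (ZMod p) ∘ₗ
    dotProductBilin (ZMod p) (ZMod p)
  have hFL : FL p n = {f | f - 0 ∈ LinearMap.range L} := by
    ext f
    simp only [sub_zero, Set.mem_ofPred_eq, LinearMap.mem_range]
    rfl
  have hle : ∀ m, StdForce (FL p n) m → m ≤ n := fun m hm =>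
    (hm.le_finrank _ 0 hFL).trans <| (LinearMap.finrank_range_le L).trans (by simp)
  exact le_antisymm (csSup_le ⟨n, stdForce_FL⟩ hle) (le_csSup ⟨n, hle⟩ stdForce_FL)

theorem hasSmallAgreement_FL : HasSmallAgreement (FL p n) := by
  rintro _ ⟨a, rfl⟩ _ ⟨b, rfl⟩ hab
  let φ : (Fin n → ZMod p) →ₗ[ZMod p] ZMod p := dotProductBilin (ZMod p) (ZMod p) (a - b)
  have hφx : ∀ x, φ x = a ⬝ᵥ x - b ⬝ᵥ x := fun x => sub_dotProduct a b x
  have hφ : φ ≠ 0 := fun h => hab <| funext fun x => sub_eq_zero.1 <|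
    (hφx x).symm.trans (LinearMap.congr_fun h x)
  refine le_of_eq (Eq.trans ?_ (card_zeros_mul_card_of_surjective φ.toAddMonoidHom
    (LinearMap.surjective_of_ne_zero hφ)))
  simp only [LinearMap.toAddMonoidHom_coe, hφx, sub_eq_zero, ZMod.card]
  rfl

theorem FL_eq_coe_image :
    FL p n = ↑(univ.image fun (a x : Fin n → ZMod p) => ∑ j, a j * x j) := by
  rw [coe_image, coe_univ, Set.image_univ]
  rfl

theorem card_image_FL :
    #(univ.image fun (a x : Fin n → ZMod p) => ∑ j, a j * x j) = p ^ n := by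
  rw [card_image_of_injective, card_univ, Fintype.card_fun, ZMod.card, Fintype.card_fin]
  intro a b hab
  funext i
  simpa [Pi.single_apply] using congr_fun hab (Pi.single i 1)

open Real in
theorem le_optWeakCart_FL {r m : ℕ} {δ : ℝ} (hδ : 0 < δ) (hq : 1 + δ < (p : ℝ) ^ r)
    (hm : m * (1 + δ) ≤ ((p : ℝ) ^ r - 1 - δ) * (log p * ((n : ℝ) - 2 * r) + 2 * log δ)) :
    m ≤ optWeakCart r (FL p n) := by
  have hp : (0 : ℝ) < p := by exact_mod_cast (Fact.out : p.Prime).pos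
  refine le_optWeakCart (Set.toFinite _) ?_
  rw [FL_eq_coe_image]
  refine hasSmallAgreement_FL.guessForce_of_le_card hδ (by rw [ZMod.card]; exact hq.le) m _
    FL_eq_coe_image.ge ?_
  rw [ZMod.card, card_image_FL, Nat.cast_pow]
  refine sq_div_le_one_sub_div_pow_mul hδ hq (by positivity) (hm.trans_eq ?_)
  rw [log_pow, log_div (by positivity) hδ.ne', log_pow]
  ring

end LinearFunctionals

open Real in
theorem exists_le_optWeakCart_FL {r : ℕ} (hr : 1 ≤ r) {ε : ℝ} (hε : 0 < ε) (hε1 : ε < 1) :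
    ∃ p₀ n₀ : ℕ, ∀ p : ℕ, p.Prime → p₀ ≤ p → ∀ n : ℕ, n₀ ≤ n →
      (1 - ε) * (p : ℝ) ^ r * log p * ((n : ℝ) - 2 * r) ≤ (optWeakCart r (FL p n) : ℝ) := by
  set ℓ := -2 * log (ε / 2)
  have hℓ : 0 ≤ ℓ := by
    have := log_nonpos (by positivity : 0 ≤ ε / 2) (by linarith)
    linarith
  refine ⟨max 3 ⌈8 / ε⌉₊, 2 * r + ⌈4 / ε * (2 + ℓ)⌉₊, fun p hp hp₀ n hn => ?_⟩
  have : Fact p.Prime := ⟨hp⟩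
  set q : ℝ := (p : ℝ) ^ r
  set X : ℝ := log p * ((n : ℝ) - 2 * r)
  set L := (1 - ε) * q * log p * ((n : ℝ) - 2 * r)
  have hp3 : (3 : ℝ) ≤ p := by exact_mod_cast le_of_max_le_left hp₀
  have hpq : (p : ℝ) ≤ q := le_self_pow₀ (by linarith) (by omega)
  have hεq : 8 ≤ q * ε := (div_le_iff₀ hε).1 <| (Nat.le_ceil _).trans <|
    (Nat.cast_le.2 (le_of_max_le_right hp₀)).trans hpq
  have hlog : 1 ≤ log p := by
    rw [le_log_iff_exp_le (by linarith)]
    exact (exp_one_lt_d9.trans (by norm_num)).le.trans hp3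
  have hn' : 4 / ε * (2 + ℓ) ≤ (n : ℝ) - 2 * r := by
    have : (2 * r + ⌈4 / ε * (2 + ℓ)⌉₊ : ℝ) ≤ n := by exact_mod_cast hn
    linarith [Nat.le_ceil (4 / ε * (2 + ℓ))]
  have hX : (n : ℝ) - 2 * r ≤ X :=
    le_mul_of_one_le_left ((by positivity : 0 ≤ 4 / ε * (2 + ℓ)).trans hn') hlog
  have hεX : 4 * (2 + ℓ) ≤ ε * X := by
    rw [div_mul_eq_mul_div, div_le_iff₀ hε] at hn'
    linarith [mul_le_mul_of_nonneg_left hX hε.le]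
  have hX0 : 0 ≤ X := by nlinarith
  have hL0 : 0 ≤ L := by
    rw [show L = (1 - ε) * (q * X) by ring]
    exact mul_nonneg (by linarith) (by positivity)
  suffices ⌈L⌉₊ ≤ optWeakCart r (FL p n) from (Nat.le_ceil L).trans (by exact_mod_cast this)
  refine le_optWeakCart_FL (δ := ε / 2) (by positivity) (by linarith) ?_
  -- with `δ = ε / 2` the required inequality reduces to `2X + qℓ + 2 ≤ (ε / 2) qX`,
  -- which `8 ≤ qε` and `4 (2 + ℓ) ≤ εX` provide
  calc (⌈L⌉₊ : ℝ) * (1 + ε / 2) ≤ (L + 1) * (1 + ε / 2) := by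
        gcongr
        exact (Nat.ceil_lt_add_one hL0).le
    _ = (1 - ε / 2) * (q * X) - ε ^ 2 / 2 * (q * X) + 1 + ε / 2 := by ring
    _ ≤ q * X - 2 * X - q * ℓ := by
        nlinarith [mul_nonneg (sub_nonneg.2 hεq) hX0,
          mul_nonneg (by linarith : 0 ≤ q) (sub_nonneg.2 hεX)]
    _ ≤ (q - 1 - ε / 2) * (X + 2 * log (ε / 2)) := by
        nlinarith [mul_nonneg (by linarith : 0 ≤ 1 - ε / 2) hX0]

/-- Let `r ≥ 1`. For every `ε > 0` there exists `p₀` such that for every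
prime `p ≥ p₀` there exists `n₀` such that for every `n ≥ max(n₀, 2r+1)`, the class
`F_L(p,n)` satisfies `opt_std(F_L(p,n)) = n` and
`opt_weak(CART_r(F_L(p,n))) ≥ (1−ε)·p^r·ln p·(opt_std(F_L(p,n)) − 2r)`. -/
theorem stmt8 (r : ℕ) (hr : 1 ≤ r) (ε : ℝ) (hε : 0 < ε) :
    ∃ p₀ : ℕ, ∀ p : ℕ, p.Prime → p₀ ≤ p → ∃ n₀ : ℕ, ∀ n : ℕ, max n₀ (2 * r + 1) ≤ n →
      optStd (FL p n) = n ∧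
      (1 - ε) * (p : ℝ) ^ r * Real.log p * ((optStd (FL p n) : ℝ) - 2 * r)
        ≤ (optWeakCart r (FL p n) : ℝ) := by
  obtain ⟨p₀, n₀, hweak⟩ : ∃ p₀ n₀ : ℕ, ∀ p : ℕ, p.Prime → p₀ ≤ p → ∀ n : ℕ, n₀ ≤ n →
      2 * r ≤ n →
      (1 - ε) * (p : ℝ) ^ r * Real.log p * ((n : ℝ) - 2 * r) ≤ (optWeakCart r (FL p n) : ℝ) := by
    rcases lt_or_ge ε 1 with hε1 | hε1
    · obtain ⟨p₀, n₀, h⟩ := exists_le_optWeakCart_FL hr hε hε1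
      exact ⟨p₀, n₀, fun p hp hp₀ n hn _ => h p hp hp₀ n hn⟩
    · refine ⟨0, 0, fun p _ _ n _ hn => le_trans ?_ (Nat.cast_nonneg _)⟩
      have hn' : (0 : ℝ) ≤ (n : ℝ) - 2 * r := sub_nonneg.2 (by exact_mod_cast hn)
      exact mul_nonpos_of_nonpos_of_nonneg (mul_nonpos_of_nonpos_of_nonneg
        (mul_nonpos_of_nonpos_of_nonneg (by linarith) (by positivity))
        (Real.log_natCast_nonneg p)) hn'
  refine ⟨p₀, fun p hp hp₀ => ⟨n₀, fun n hn => ?_⟩⟩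
  have : Fact p.Prime := ⟨hp⟩
  rw [optStd_FL]
  exact ⟨rfl, hweak p hp hp₀ n (le_of_max_le_left hn) (by have := le_of_max_le_right hn; omega)⟩
end

section
/- Let r ≥ 1 and let F be a set of permutations of {1,…,n} with |F| ≥ 2. Then opt_weak,c,r(F) < 2^r·ln(|F|). -/
/-- `opt_weak,c,r(F)`: the comparison model. In each round the adversary chooses `r` distinct
ordered pairs of distinct inputs, and the learner guesses, for each pair `(i,j)`, whether
`f i < f j`; weak reinforcement (told only whether all `r` guesses are correct). -/
noncomputable def optComp (n r : ℕ) (F : Set (Equiv.Perm (Fin n))) : ℕ :=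
  sSup {m | GuessForce
    (fun (x : {x : Fin r → Fin n × Fin n // Function.Injective x ∧ ∀ k, (x k).1 ≠ (x k).2})
         (g : Fin r → Bool) f =>
      ∀ k, (g k = true ↔ f (x.1 k).1 < f (x.1 k).2)) F m}

theorem Set.exists_ncard_le_card_mul_ncard_sep {α ι : Type*} [Fintype ι] [Nonempty ι]
    (V : Set α) (p : ι → α → Prop) (hcover : ∀ x ∈ V, ∃ i, p i x) :
    ∃ i, V.ncard ≤ Fintype.card ι * {x ∈ V | p i x}.ncard := by
  obtain ⟨i₀, hi₀⟩ := Finite.exists_max fun i => {x ∈ V | p i x}.ncard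
  refine ⟨i₀, ?_⟩
  have hV : V = ⋃ i, {x ∈ V | p i x} := by
    ext x
    simp only [Set.mem_iUnion, Set.mem_ofPred_eq]
    exact ⟨fun hx => (hcover x hx).imp fun _ => And.intro hx, fun ⟨_, hx, _⟩ => hx⟩
  calc V.ncard = (⋃ i, {x ∈ V | p i x}).ncard := congrArg Set.ncard hV
    _ ≤ ∑ i, {x ∈ V | p i x}.ncard := Set.ncard_iUnion_le_of_fintype _
    _ ≤ Fintype.card ι * {x ∈ V | p i₀ x}.ncard :=
      (Finset.sum_le_card_nsmul _ _ _ fun i _ => hi₀ i).trans_eq (by simp)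

theorem Real.lt_mul_log_of_pow_le_sub_one_pow_mul {N x : ℝ} {m : ℕ} (hN : 1 ≤ N) (hx : 1 < x)
    (h : N ^ m ≤ (N - 1) ^ m * x) : (m : ℝ) < N * Real.log x := by
  rcases Nat.eq_zero_or_pos m with rfl | hm
  · simpa using mul_pos (by linarith) (Real.log_pos hx)
  have hN₀ : 0 < N := by linarith
  rw [← div_lt_iff₀' hN₀, Real.lt_log_iff_exp_lt (by linarith)]
  have hx' : 1 ≤ (1 - 1 / N) ^ m * x := by
    rwa [one_sub_div hN₀.ne', div_pow, div_mul_eq_mul_div, one_le_div (by positivity)]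
  have hshrink : (1 - 1 / N) ^ m < Real.exp (-(m / N)) := by
    rw [show -((m : ℝ) / N) = m * -(1 / N) by ring, Real.exp_nat_mul]
    refine pow_lt_pow_left₀ (Real.one_sub_lt_exp_neg (by positivity)) ?_ hm.ne'
    rw [sub_nonneg, div_le_one hN₀]
    exact hN
  calc Real.exp (m / N) ≤ Real.exp (m / N) * ((1 - 1 / N) ^ m * x) :=
        le_mul_of_one_le_right (Real.exp_nonneg _) hx'
    _ < Real.exp (m / N) * (Real.exp (-(m / N)) * x) := by gcongr
    _ = x := by rw [← mul_assoc, ← Real.exp_add, add_neg_cancel, Real.exp_zero, one_mul]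

namespace GuessForce

variable {α Q A : Type*} [Fintype A] [Nonempty A] {ok : Q → A → α → Prop}

theorem pow_card_le (hex : ∀ q f, ∃ g, ok q g f) {V : Set α} {m : ℕ}
    (h : GuessForce ok V m) (hV : V.Finite) :
    (Fintype.card A : ℝ) ^ m ≤ ((Fintype.card A : ℝ) - 1) ^ m * V.ncard := by
  induction h with
  | zero V hne =>
    rw [pow_zero, pow_zero, one_mul, Nat.one_le_cast]
    exact (Set.ncard_pos hV).2 hne
  | step V m q c _ _ ih =>
    obtain ⟨g, hg⟩ := Set.exists_ncard_le_card_mul_ncard_sep V (ok q) fun f _ => hex q f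
    have hgR : (V.ncard : ℝ) ≤ Fintype.card A * {f ∈ V | ok q g f}.ncard := by exact_mod_cast hg
    set N : ℝ := (Fintype.card A : ℝ)
    have hN : (0 : ℝ) ≤ N - 1 := by simp [N, Nat.one_le_cast.2 Fintype.card_pos]
    have hsub : {f ∈ V | ok q g f}.ncard ≤ V.ncard := Set.ncard_le_ncard (Set.sep_subset _ _) hV
    have ihg := ih g (hV.subset (by split <;> exact Set.sep_subset _ _))
    cases hc : c g with
    | true =>
      simp only [hc, if_true] at ihg
      have hsplit : ({f ∈ V | ¬ ok q g f}.ncard : ℝ) = V.ncard - {f ∈ V | ok q g f}.ncard := by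
        rw [eq_sub_iff_add_eq, add_comm]
        exact_mod_cast Set.ncard_inter_add_ncard_sdiff_eq_ncard V {f | ok q g f} hV
      calc N ^ (m + 1) = N * N ^ m := pow_succ' N m
        _ ≤ N * ((N - 1) ^ m * {f ∈ V | ¬ ok q g f}.ncard) := by gcongr
        _ = (N - 1) ^ m * (N * V.ncard - N * {f ∈ V | ok q g f}.ncard) := by rw [hsplit]; ring
        _ ≤ (N - 1) ^ m * (N * V.ncard - V.ncard) := by gcongr
        _ = (N - 1) ^ (m + 1) * V.ncard := by ring
    | false =>
      simp only [hc, if_false, Bool.false_eq_true] at ihg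
      exact ihg.trans (by gcongr)

theorem lt_card_mul_log (hex : ∀ q f, ∃ g, ok q g f) {V : Set α} {m : ℕ}
    (h : GuessForce ok V m) (hV : V.Finite) (hV₂ : 2 ≤ V.ncard) :
    (m : ℝ) < Fintype.card A * Real.log V.ncard :=
  Real.lt_mul_log_of_pow_le_sub_one_pow_mul (Nat.one_le_cast.2 Fintype.card_pos)
    (by exact_mod_cast hV₂) (h.pow_card_le hex hV)

theorem sSup_lt_card_mul_log (hex : ∀ q f, ∃ g, ok q g f) {V : Set α} (hV : V.Finite)
    (hV₂ : 2 ≤ V.ncard) :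
    ((sSup {m | GuessForce ok V m} : ℕ) : ℝ) < Fintype.card A * Real.log V.ncard := by
  have hbdd : BddAbove {m | GuessForce ok V m} :=
    ⟨⌈Fintype.card A * Real.log V.ncard⌉₊, fun m hm =>
      Nat.cast_le.1 (((lt_card_mul_log hex hm hV hV₂).le).trans (Nat.le_ceil _))⟩
  have hne : Set.Nonempty {m | GuessForce ok V m} :=
    ⟨0, zero V (Set.nonempty_of_ncard_ne_zero (by omega))⟩
  exact lt_card_mul_log hex (Nat.sSup_mem hne hbdd) hV hV₂

end GuessForce

theorem stmt15_general (n r : ℕ) (F : Set (Equiv.Perm (Fin n))) (hF : 2 ≤ F.ncard) :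
    (optComp n r F : ℝ) < (2 : ℝ) ^ r * Real.log F.ncard := by
  have hcard : (Fintype.card (Fin r → Bool) : ℝ) = 2 ^ r := by simp
  rw [optComp, ← hcard]
  refine GuessForce.sSup_lt_card_mul_log (fun q f => ?_) F.toFinite hF
  exact ⟨fun k => decide (f (q.1 k).1 < f (q.1 k).2), fun k => by simp⟩

/-- Let `r ≥ 1` and let `F` be a set of permutations of `{1,…,n}` with
`|F| ≥ 2`. Then `opt_weak,c,r(F) < 2^r·ln |F|`. -/
theorem stmt15 (n r : ℕ) (hr : 1 ≤ r) (F : Set (Equiv.Perm (Fin n))) (hF : 2 ≤ F.ncard) :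
    (optComp n r F : ℝ) < (2 : ℝ) ^ r * Real.log F.ncard :=
  stmt15_general n r F hF
end
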